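/- arXiv:1507.05291 — 2 statements merged into one kernel-verified Lean document; each statement's English description precedes it below -/
import Mathlib

section
/- Carleson embedding theorem on L^p(μ): Let D be a dyadic grid in ℝⁿ, 1 < p ≤ 2, and for each S ∈ D a measurable function A_S supported in S. If Car := (sup_{Q∈D} μ(Q)^{-1} ∫_Q (∑_{S⊂Q, S∈D} |A_S(x)|²)^{p/2} dμ(x))^{1/p} < ∞, then ‖(∑_{S∈D} |⟨f⟩_S|² |A_S|²)^{1/2}‖_{L^p(μ)} ≲ Car · ‖f‖_{L^p(μ)} for all f ∈ L^p(μ). -/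
open MeasureTheory
open scoped ENNReal NNReal

noncomputable section

/-- The (half-open) dyadic cube of sidelength `2^k` with corner `c * 2^k` in `ℝⁿ`. -/
def dyadicCube (n : ℕ) (k : ℤ) (c : Fin n → ℤ) : Set (Fin n → ℝ) :=
  {x | ∀ i, (c i : ℝ) * 2 ^ k ≤ x i ∧ x i < ((c i : ℝ) + 1) * 2 ^ k}

/-- The average `⟨f⟩_S` of `f` over `S` (interpreted as `0` when `μ(S) = 0`). -/
def cubeAvg {n : ℕ} (μ : Measure (Fin n → ℝ)) (f : (Fin n → ℝ) → ℝ)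
    (q : ℤ × (Fin n → ℤ)) : ℝ :=
  (μ (dyadicCube n q.1 q.2)).toReal⁻¹ * ∫ y in dyadicCube n q.1 q.2, f y ∂μ

/-!
Write `φ = |f|` and `a_Q = ⨍_Q φ`, so that `|⟨f⟩_Q| ≤ a_Q`, and sort the cubes into the dyadic
levels `𝒟_j = {Q : 2^(j+1) < a_Q ≤ 2^(j+2)}` with unions `E_j`. As `p/2 ≤ 1`, the `p/2`-th power
of the square function is at most `∑_j 2^((j+2)p) (∑_{Q ∈ 𝒟_j} |A_Q|²)^(p/2)`, and the Carleson
condition, applied on the maximal cubes of `𝒟_j`, bounds the integral of the `j`-th term by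
`Car^p μ(E_j)`. On every cube of `𝒟_j` the function `φ 1_{φ > 2^j}` has average above `2^j`, so the
weak type `(1,1)` of the dyadic maximal operator gives `2^j μ(E_j) ≤ ∫_{φ > 2^j} φ`. Summing the
geometric series `∑_{2^j < φ} 2^(j(p-1)) ≤ φ^(p-1) / (1 - 2^(1-p))` leaves
`4^p (1 - 2^(1-p))⁻¹ Car^p ∫ φ^p`. Families of cubes of unbounded scale are exhausted by bounded
ones and handled by monotone convergence, so no assumption on `μ` is needed.
-/

namespace ENNReal

lemma iSup_rpow {ι : Sort*} (f : ι → ℝ≥0∞) {c : ℝ} (hc : 0 < c) :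
    (⨆ i, f i) ^ c = ⨆ i, f i ^ c :=
  (ENNReal.orderIsoRpow c hc).map_iSup f

lemma rpow_tsum_le {ι : Type*} (a : ι → ℝ≥0∞) {c : ℝ} (h0 : 0 < c) (h1 : c ≤ 1) :
    (∑' i, a i) ^ c ≤ ∑' i, a i ^ c := by
  classical
  rw [ENNReal.tsum_eq_iSup_sum, iSup_rpow _ h0]
  refine iSup_le fun s => ?_
  refine le_trans ?_ (ENNReal.sum_le_tsum s)
  induction s using Finset.cons_induction with
  | empty => simp [ENNReal.zero_rpow_of_pos h0]
  | cons i s his ih =>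
    rw [Finset.sum_cons, Finset.sum_cons]
    exact (ENNReal.rpow_add_le_add_rpow _ _ h0.le h1).trans (add_le_add_right ih _)

lemma exists_two_rpow_lt_le {s : ℝ≥0∞} (h0 : s ≠ 0) (htop : s ≠ ∞) :
    ∃ j : ℤ, (2 : ℝ≥0∞) ^ (j : ℝ) < s ∧ s ≤ 2 ^ ((j : ℝ) + 1) := by
  obtain ⟨j, hj⟩ := exists_mem_Ioc_zpow h0 htop one_lt_two ENNReal.ofNat_ne_top
  refine ⟨j, ?_, ?_⟩
  · rw [rpow_intCast]
    exact hj.1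
  · rw [← Int.cast_one, ← Int.cast_add, rpow_intCast]
    exact hj.2

lemma tsum_ite_two_rpow_lt_le {r : ℝ} (hr : 0 < r) (s : ℝ≥0∞) :
    ∑' j : ℤ, (if (2 : ℝ≥0∞) ^ (j : ℝ) < s then (2 : ℝ≥0∞) ^ ((j : ℝ) * r) else 0) ≤
      s ^ r * (1 - 2 ^ (-r))⁻¹ := by
  rcases eq_or_ne s ∞ with rfl | htop
  · rw [ENNReal.top_rpow_of_pos hr, ENNReal.top_mul (ENNReal.inv_ne_zero.2
      (ENNReal.sub_ne_top ENNReal.one_ne_top))]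
    exact le_top
  rcases eq_or_ne s 0 with rfl | h0
  · simp
  obtain ⟨J, hJ⟩ := exists_two_rpow_lt_le h0 htop
  have hlt_iff : ∀ j : ℤ, (2 : ℝ≥0∞) ^ (j : ℝ) < s ↔ j ≤ J := fun j => by
    refine ⟨fun h => ?_, fun h => lt_of_le_of_lt (ENNReal.rpow_le_rpow_of_exponent_le one_le_two
      (by exact_mod_cast h)) hJ.1⟩
    by_contra! hJj
    refine (h.trans_le hJ.2).not_ge (ENNReal.rpow_le_rpow_of_exponent_le one_le_two ?_)
    exact_mod_cast Int.add_one_le_iff.2 hJj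
  have hreindex : Function.support (fun j : ℤ =>
      if (2 : ℝ≥0∞) ^ (j : ℝ) < s then (2 : ℝ≥0∞) ^ ((j : ℝ) * r) else 0) ⊆
      Set.range fun m : ℕ => J - m := fun j hj => by
    have hjJ : j ≤ J := (hlt_iff j).1 (by by_contra h; exact hj (if_neg h))
    exact ⟨(J - j).toNat, show J - ((J - j).toNat : ℤ) = j by omega⟩
  rw [← (show Function.Injective fun m : ℕ => J - m by intro a b h; simpa using h).tsum_eq hreindex]
  calc ∑' m : ℕ, (if (2 : ℝ≥0∞) ^ (((J - m : ℤ)) : ℝ) < s then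
        (2 : ℝ≥0∞) ^ (((J - m : ℤ) : ℝ) * r) else 0)
      = ∑' m : ℕ, 2 ^ ((J : ℝ) * r) * (2 ^ (-r)) ^ m := tsum_congr fun m => by
        rw [if_pos ((hlt_iff _).2 (by omega)), ← ENNReal.rpow_natCast, ← ENNReal.rpow_mul,
          ← ENNReal.rpow_add _ _ two_ne_zero ENNReal.ofNat_ne_top]
        congr 1
        push_cast
        ring
    _ = (2 ^ (J : ℝ)) ^ r * (1 - 2 ^ (-r))⁻¹ := by
        rw [ENNReal.tsum_mul_left, ENNReal.tsum_geometric, ENNReal.rpow_mul]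
    _ ≤ s ^ r * (1 - 2 ^ (-r))⁻¹ := by
        gcongr
        exact hJ.1.le

end ENNReal

namespace MeasureTheory

lemma setLAverage_add_const_le {α : Type*} [MeasurableSpace α] {μ : Measure α} (s : Set α)
    (g : α → ℝ≥0∞) (t : ℝ≥0∞) : ⨍⁻ x in s, (g x + t) ∂μ ≤ ⨍⁻ x in s, g x ∂μ + t := by
  rw [setLAverage_eq, setLAverage_eq, lintegral_add_right _ measurable_const, setLIntegral_const,
    ENNReal.add_div, mul_div_assoc]
  exact add_le_add_right (mul_le_of_le_one_right' ENNReal.div_self_le_one) _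

lemma tsum_two_rpow_mul_setLIntegral_le {α : Type*} [MeasurableSpace α] {μ : Measure α}
    {φ : α → ℝ≥0∞} (hφ : Measurable φ) {r : ℝ} (hr : 0 < r) :
    ∑' j : ℤ, 2 ^ ((j : ℝ) * r) * ∫⁻ x in {x | 2 ^ (j : ℝ) < φ x}, φ x ∂μ ≤
      (1 - 2 ^ (-r))⁻¹ * ∫⁻ x, φ x ^ (r + 1) ∂μ := by
  have hlevel : ∀ j : ℤ, MeasurableSet {x | (2 : ℝ≥0∞) ^ (j : ℝ) < φ x} := fun j =>
    measurableSet_lt measurable_const hφ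
  simp_rw [← lintegral_indicator (hlevel _), ← lintegral_const_mul _ (hφ.indicator (hlevel _))]
  rw [← lintegral_tsum fun j => ((hφ.indicator (hlevel j)).const_mul _).aemeasurable,
    ← lintegral_const_mul _ (hφ.pow_const _)]
  refine lintegral_mono fun x => ?_
  calc ∑' j : ℤ, 2 ^ ((j : ℝ) * r) * {x | (2 : ℝ≥0∞) ^ (j : ℝ) < φ x}.indicator φ x
      = (∑' j : ℤ, if (2 : ℝ≥0∞) ^ (j : ℝ) < φ x then (2 : ℝ≥0∞) ^ ((j : ℝ) * r) else 0) * φ x := by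
        rw [← ENNReal.tsum_mul_right]
        refine tsum_congr fun j => ?_
        by_cases hj : (2 : ℝ≥0∞) ^ (j : ℝ) < φ x
        · rw [if_pos hj, Set.indicator_of_mem (show x ∈ {x | (2 : ℝ≥0∞) ^ (j : ℝ) < φ x} from hj)]
        · rw [if_neg hj, Set.indicator_of_notMem (show x ∉ {x | (2 : ℝ≥0∞) ^ (j : ℝ) < φ x} from hj),
            mul_zero, zero_mul]
    _ ≤ φ x ^ r * (1 - 2 ^ (-r))⁻¹ * φ x := by
        gcongr
        exact ENNReal.tsum_ite_two_rpow_lt_le hr _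
    _ = (1 - 2 ^ (-r))⁻¹ * φ x ^ (r + 1) := by
        rw [ENNReal.rpow_add_of_nonneg _ _ hr.le zero_le_one, ENNReal.rpow_one]
        ring

end MeasureTheory

namespace DyadicCube

variable {n : ℕ}

lemma mem_dyadicCube_iff {k : ℤ} {c : Fin n → ℤ} {x : Fin n → ℝ} :
    x ∈ dyadicCube n k c ↔ ∀ i, ⌊x i / 2 ^ k⌋ = c i := by
  have h2k : (0 : ℝ) < 2 ^ k := zpow_pos two_pos k
  simp only [dyadicCube, Set.mem_ofPred_eq, Int.floor_eq_iff, le_div_iff₀ h2k, div_lt_iff₀ h2k]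

lemma dyadicCube_eq_pi (k : ℤ) (c : Fin n → ℤ) :
    dyadicCube n k c = Set.univ.pi fun i => Set.Ico ((c i : ℝ) * 2 ^ k) ((c i + 1) * 2 ^ k) := by
  ext x
  simp [dyadicCube]

lemma measurableSet_dyadicCube (k : ℤ) (c : Fin n → ℤ) : MeasurableSet (dyadicCube n k c) := by
  rw [dyadicCube_eq_pi]
  exact MeasurableSet.univ_pi fun _ => measurableSet_Ico

lemma dyadicCube_nonempty (k : ℤ) (c : Fin n → ℤ) : (dyadicCube n k c).Nonempty := by
  rw [dyadicCube_eq_pi, Set.univ_pi_nonempty_iff]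
  exact fun i => Set.nonempty_Ico.2 (mul_lt_mul_of_pos_right (lt_add_one _) (zpow_pos two_pos k))

lemma floor_div_two_zpow_of_le {k k' : ℤ} (h : k ≤ k') (y : ℝ) :
    ⌊y / 2 ^ k'⌋ = ⌊y / 2 ^ k⌋ / (2 ^ (k' - k).toNat : ℕ) := by
  rw [← Int.floor_div_natCast, div_div, Nat.cast_pow, Nat.cast_ofNat, ← zpow_natCast,
    ← zpow_add₀ two_ne_zero, Int.toNat_of_nonneg (sub_nonneg.2 h), add_sub_cancel]

lemma dyadicCube_subset_of_le {k k' : ℤ} {c c' : Fin n → ℤ} (h : k ≤ k')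
    (hmeet : (dyadicCube n k c ∩ dyadicCube n k' c').Nonempty) :
    dyadicCube n k c ⊆ dyadicCube n k' c' := by
  obtain ⟨x, hx, hx'⟩ := hmeet
  intro y hy
  rw [mem_dyadicCube_iff] at hx hx' hy ⊢
  intro i
  rw [← hx' i, floor_div_two_zpow_of_le h, floor_div_two_zpow_of_le h, hx i, hy i]

def cube (q : ℤ × (Fin n → ℤ)) : Set (Fin n → ℝ) := dyadicCube n q.1 q.2

lemma measurableSet_cube (q : ℤ × (Fin n → ℤ)) : MeasurableSet (cube q) :=
  measurableSet_dyadicCube q.1 q.2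

lemma cube_subset_of_le {q q' : ℤ × (Fin n → ℤ)} (h : q.1 ≤ q'.1)
    (hmeet : (cube q ∩ cube q').Nonempty) : cube q ⊆ cube q' :=
  dyadicCube_subset_of_le h hmeet

def IsMaximalCube (S : Set (ℤ × (Fin n → ℤ))) (q : ℤ × (Fin n → ℤ)) : Prop :=
  q ∈ S ∧ ∀ q' ∈ S, cube q ⊆ cube q' → cube q' ⊆ cube q

variable {S : Set (ℤ × (Fin n → ℤ))}

lemma exists_isMaximalCube_superset {N : ℤ} (hS : ∀ q ∈ S, q.1 ≤ N) {q : ℤ × (Fin n → ℤ)}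
    (hq : q ∈ S) : ∃ m, IsMaximalCube S m ∧ cube q ⊆ cube m := by
  obtain ⟨k, ⟨c, hcS, hqc⟩, hk⟩ := Int.exists_greatest_of_bdd
    (P := fun k => ∃ c, (k, c) ∈ S ∧ cube q ⊆ cube (k, c))
    ⟨N, fun k ⟨c, hc, _⟩ => hS _ hc⟩ ⟨q.1, q.2, hq, subset_rfl⟩
  refine ⟨(k, c), ⟨hcS, fun q' hq' hsub => ?_⟩, hqc⟩
  rcases le_or_gt q'.1 k with hle | hlt
  · obtain ⟨x, hx⟩ := dyadicCube_nonempty (n := n) k c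
    exact cube_subset_of_le hle ⟨x, hsub hx, hx⟩
  · exact absurd (hk q'.1 ⟨q'.2, hq', hqc.trans hsub⟩) (not_le.2 hlt)

lemma IsMaximalCube.disjoint {q q' : ℤ × (Fin n → ℤ)} (hq : IsMaximalCube S q)
    (hq' : IsMaximalCube S q') (hne : cube q ≠ cube q') : Disjoint (cube q) (cube q') := by
  refine Set.disjoint_iff_inter_eq_empty.2 (Set.not_nonempty_iff_eq_empty.1 fun hmeet => hne ?_)
  rcases le_total q.1 q'.1 with h | h
  · have hsub := cube_subset_of_le h hmeet
    exact hsub.antisymm (hq.2 q' hq'.1 hsub)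
  · have hsub := cube_subset_of_le h (Set.inter_comm _ _ ▸ hmeet)
    exact (hq'.2 q hq.1 hsub).antisymm hsub

/-- The maximal cubes of a family of bounded scale are disjoint and cover its union. -/
lemma setLIntegral_biUnion_cube_le {μ : Measure (Fin n → ℝ)} {N : ℤ} (hS : ∀ q ∈ S, q.1 ≤ N)
    {g h : (Fin n → ℝ) → ℝ≥0∞}
    (hgh : ∀ m, IsMaximalCube S m → ∫⁻ x in cube m, g x ∂μ ≤ ∫⁻ x in cube m, h x ∂μ) :
    ∫⁻ x in ⋃ q ∈ S, cube q, g x ∂μ ≤ ∫⁻ x in ⋃ q ∈ S, cube q, h x ∂μ := by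
  set M := cube '' {m | IsMaximalCube S m}
  have hU : ⋃ q ∈ S, cube q = ⋃ s ∈ M, id s := by
    refine subset_antisymm (Set.iUnion₂_subset fun q hq => ?_) (Set.iUnion₂_subset ?_)
    · obtain ⟨m, hm, hqm⟩ := exists_isMaximalCube_superset hS hq
      exact hqm.trans (Set.subset_biUnion_of_mem (u := id) ⟨m, hm, rfl⟩)
    · rintro _ ⟨m, hm, rfl⟩
      exact Set.subset_biUnion_of_mem hm.1
  have hM : M.Countable := (Set.to_countable _).image _
  have hMm : ∀ s ∈ M, MeasurableSet (id s) := by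
    rintro _ ⟨m, -, rfl⟩
    exact measurableSet_cube m
  have hMd : M.PairwiseDisjoint id := by
    rintro _ ⟨m, hm, rfl⟩ _ ⟨m', hm', rfl⟩ hne
    exact hm.disjoint hm' hne
  rw [hU, lintegral_biUnion hM hMm hMd, lintegral_biUnion hM hMm hMd]
  refine ENNReal.tsum_le_tsum fun ⟨s, hs⟩ => ?_
  obtain ⟨m, hm, rfl⟩ := hs
  exact hgh m hm

variable {μ : Measure (Fin n → ℝ)}

lemma mul_measure_le_setLIntegral_of_lt_setLAverage {s : Set (Fin n → ℝ)}
    {g : (Fin n → ℝ) → ℝ≥0∞} {t : ℝ≥0∞} (h : t < ⨍⁻ x in s, g x ∂μ) :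
    t * μ s ≤ ∫⁻ x in s, g x ∂μ :=
  ENNReal.mul_le_of_le_div (setLAverage_eq μ g s ▸ h.le)

/-- Weak type `(1, 1)` of the dyadic maximal operator, for an arbitrary measure. -/
lemma mul_measure_biUnion_le_lintegral {g : (Fin n → ℝ) → ℝ≥0∞} {t : ℝ≥0∞}
    (hS : ∀ q ∈ S, t < ⨍⁻ x in cube q, g x ∂μ) :
    t * μ (⋃ q ∈ S, cube q) ≤ ∫⁻ x, g x ∂μ := by
  have htrunc : ∀ N : ℤ, t * μ (⋃ q ∈ S ∩ {q | q.1 ≤ N}, cube q) ≤ ∫⁻ x, g x ∂μ := fun N =>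
    calc t * μ (⋃ q ∈ S ∩ {q | q.1 ≤ N}, cube q)
        = ∫⁻ _ in ⋃ q ∈ S ∩ {q | q.1 ≤ N}, cube q, t ∂μ := (setLIntegral_const _ t).symm
      _ ≤ ∫⁻ x in ⋃ q ∈ S ∩ {q | q.1 ≤ N}, cube q, g x ∂μ :=
        setLIntegral_biUnion_cube_le (fun q hq => hq.2) fun m hm => by
          rw [setLIntegral_const]
          exact mul_measure_le_setLIntegral_of_lt_setLAverage (hS m hm.1.1)
      _ ≤ ∫⁻ x, g x ∂μ := setLIntegral_le_lintegral _ _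
  have hU : ⋃ q ∈ S, cube q = ⋃ N : ℤ, ⋃ q ∈ S ∩ {q | q.1 ≤ N}, cube q :=
    subset_antisymm (Set.iUnion₂_subset fun q hq => Set.subset_iUnion_of_subset q.1
      (Set.subset_biUnion_of_mem (u := cube) ⟨hq, show q.1 ≤ q.1 from le_rfl⟩))
      (Set.iUnion_subset fun N => Set.biUnion_subset_biUnion_left Set.inter_subset_left)
  have hmono : Monotone fun N : ℤ => ⋃ q ∈ S ∩ {q | q.1 ≤ N}, cube q := fun N N' hN =>
    Set.biUnion_subset_biUnion_left (Set.inter_subset_inter_right _ fun q hq => le_trans hq hN)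
  rw [hU, hmono.measure_iUnion, ENNReal.mul_iSup]
  exact iSup_le htrunc

def IsCarlesonFamily (μ : Measure (Fin n → ℝ)) (w : ℤ × (Fin n → ℤ) → (Fin n → ℝ) → ℝ≥0∞)
    (r : ℝ) (K : ℝ≥0∞) : Prop :=
  ∀ Q : ℤ × (Fin n → ℤ),
    ∫⁻ x in cube Q, (∑' S : {q // cube q ⊆ cube Q}, w S.1 x) ^ r ∂μ ≤ K * μ (cube Q)

variable {w : ℤ × (Fin n → ℤ) → (Fin n → ℝ) → ℝ≥0∞} {r : ℝ} {K : ℝ≥0∞}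

lemma IsCarlesonFamily.indicator (hC : IsCarlesonFamily μ w r K) (hr : 0 ≤ r)
    (T : Set (ℤ × (Fin n → ℤ))) : IsCarlesonFamily μ (T.indicator w) r K := fun Q =>
  (lintegral_mono fun x => ENNReal.rpow_le_rpow (ENNReal.tsum_le_tsum fun S => by
    by_cases hS : S.1 ∈ T <;> simp [hS]) hr).trans (hC Q)

lemma IsCarlesonFamily.lintegral_le_of_bddAbove (hC : IsCarlesonFamily μ w r K) (hr : 0 < r)
    (hsupp : ∀ q, ∀ x ∉ cube q, w q x = 0) {N : ℤ} (hS : ∀ q ∈ S, q.1 ≤ N)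
    (hwS : ∀ q ∉ S, w q = 0) :
    ∫⁻ x, (∑' q, w q x) ^ r ∂μ ≤ K * μ (⋃ q ∈ S, cube q) := by
  have hmem : ∀ q x, w q x ≠ 0 → q ∈ S ∧ x ∈ cube q := fun q x h =>
    ⟨by_contra fun hq => h (by rw [hwS q hq, Pi.zero_apply]), by_contra fun hx => h (hsupp q x hx)⟩
  have hsupport : (Function.support fun x => (∑' q, w q x) ^ r) ⊆ ⋃ q ∈ S, cube q := by
    intro x hx
    obtain ⟨q, hq⟩ : ∃ q, w q x ≠ 0 := by
      by_contra! h
      simp [h, ENNReal.zero_rpow_of_pos hr] at hx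
    exact Set.mem_biUnion (hmem q x hq).1 (hmem q x hq).2
  rw [← setLIntegral_eq_of_support_subset hsupport, ← setLIntegral_const]
  refine setLIntegral_biUnion_cube_le hS fun m hm => ?_
  have hlocal : ∀ x ∈ cube m, (∑' S : {q // cube q ⊆ cube m}, w S.1 x) = ∑' q, w q x := by
    intro x hx
    refine tsum_subtype_eq_of_support_subset (f := fun q => w q x) (s := {q | cube q ⊆ cube m})
      fun q hq => ?_
    obtain ⟨hqS, hxq⟩ := hmem q x hq
    obtain ⟨m', hm', hqm'⟩ := exists_isMaximalCube_superset hS hqS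
    have hm'm : cube m' = cube m := by
      by_contra hne
      exact Set.disjoint_left.1 (hm'.disjoint hm hne) (hqm' hxq) hx
    exact hm'm ▸ hqm'
  rw [setLIntegral_const, ← setLIntegral_congr_fun (measurableSet_cube m)
    fun x hx => congrArg (· ^ r) (hlocal x hx)]
  exact hC m

lemma measurable_indicator_apply (hw : ∀ q, Measurable (w q)) (T : Set (ℤ × (Fin n → ℤ)))
    (q : ℤ × (Fin n → ℤ)) : Measurable (T.indicator w q) := by
  by_cases hq : q ∈ T
  · simpa [hq] using hw q
  · rw [Set.indicator_of_notMem hq]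
    exact measurable_zero

lemma IsCarlesonFamily.lintegral_indicator_le (hC : IsCarlesonFamily μ w r K) (hr : 0 < r)
    (hw : ∀ q, Measurable (w q)) (hsupp : ∀ q, ∀ x ∉ cube q, w q x = 0)
    (S : Set (ℤ × (Fin n → ℤ))) :
    ∫⁻ x, (∑' q, S.indicator w q x) ^ r ∂μ ≤ K * μ (⋃ q ∈ S, cube q) := by
  simp_rw [ENNReal.tsum_eq_iSup_sum, ENNReal.iSup_rpow _ hr]
  rw [lintegral_iSup_directed (fun s => ((s.measurable_sum fun q _ =>
      measurable_indicator_apply hw S q).pow_const r).aemeasurable)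
    (Monotone.directed_le fun s s' hs x =>
      ENNReal.rpow_le_rpow (Finset.sum_le_sum_of_subset hs) hr.le)]
  refine iSup_le fun s => ?_
  obtain ⟨N, hN⟩ := (s.image Prod.fst).bddAbove
  have hfin : ∀ x, ∑ q ∈ s, S.indicator w q x = ∑' q, (S ∩ s).indicator w q x := fun x => by
    rw [sum_eq_tsum_indicator]
    refine tsum_congr fun q => ?_
    by_cases hqs : q ∈ s <;> by_cases hqS : q ∈ S <;> simp [hqs, hqS]
  simp_rw [hfin]
  refine ((hC.indicator hr.le _).lintegral_le_of_bddAbove hr (S := S ∩ s)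
    (fun q x hx => ?_) (fun q hq => hN (Finset.mem_image_of_mem _ hq.2))
    fun q hq => Set.indicator_of_notMem hq w).trans
    (mul_le_mul_right (measure_mono (Set.biUnion_subset_biUnion_left Set.inter_subset_left)) _)
  by_cases hq : q ∈ S ∩ s <;> simp [hq, hsupp q x hx]

lemma mul_measure_biUnion_le_setLIntegral {φ : (Fin n → ℝ) → ℝ≥0∞} (hφ : Measurable φ)
    {t : ℝ≥0∞} (hS : ∀ q ∈ S, 2 * t < ⨍⁻ x in cube q, φ x ∂μ) :
    t * μ (⋃ q ∈ S, cube q) ≤ ∫⁻ x in {x | t < φ x}, φ x ∂μ := by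
  rw [← lintegral_indicator (measurableSet_lt measurable_const hφ)]
  refine mul_measure_biUnion_le_lintegral fun q hq => ?_
  by_contra! hle
  have hφle : ∀ x, φ x ≤ {x | t < φ x}.indicator φ x + t := fun x => by
    by_cases hx : t < φ x
    · simp [Set.indicator_of_mem (show x ∈ {x | t < φ x} from hx)]
    · simpa [Set.indicator_of_notMem (show x ∉ {x | t < φ x} from hx)] using not_lt.1 hx
  refine (hS q hq).not_ge ?_
  calc ⨍⁻ x in cube q, φ x ∂μ
      ≤ ⨍⁻ x in cube q, ({x | t < φ x}.indicator φ x + t) ∂μ :=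
        setLAverage_mono_ae _ (Filter.Eventually.of_forall hφle)
    _ ≤ ⨍⁻ x in cube q, {x | t < φ x}.indicator φ x ∂μ + t := setLAverage_add_const_le _ _ _
    _ ≤ 2 * t := by rw [two_mul]; exact add_le_add_left hle _

lemma ofReal_abs_cubeAvg_le (μ : Measure (Fin n → ℝ)) (f : (Fin n → ℝ) → ℝ)
    (q : ℤ × (Fin n → ℤ)) :
    ENNReal.ofReal |cubeAvg μ f q| ≤ ⨍⁻ x in cube q, (‖f x‖₊ : ℝ≥0∞) ∂μ := by
  change ENNReal.ofReal |(μ (cube q)).toReal⁻¹ * ∫ y in cube q, f y ∂μ| ≤ _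
  rw [setLAverage_eq, abs_mul, abs_inv, abs_of_nonneg ENNReal.toReal_nonneg]
  rcases eq_or_ne (μ (cube q)).toReal 0 with h0 | h0
  · simp [h0]
  have hfin : μ (cube q) ≠ ∞ := fun h => h0 (by simp [h])
  rw [ENNReal.ofReal_mul (inv_nonneg.2 ENNReal.toReal_nonneg),
    ENNReal.ofReal_inv_of_pos (lt_of_le_of_ne ENNReal.toReal_nonneg (Ne.symm h0)),
    ENNReal.ofReal_toReal hfin, ← Real.enorm_eq_ofReal_abs, div_eq_mul_inv, mul_comm]
  gcongr
  simpa [enorm_eq_nnnorm] using enorm_integral_le_lintegral_enorm f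

def dyadicLevel {ι : Type*} (b : ι → ℝ≥0∞) (j : ℤ) : Set ι :=
  {i | (2 : ℝ≥0∞) ^ ((j : ℝ) + 1) < b i ∧ b i ≤ 2 ^ ((j : ℝ) + 2)}

lemma tsum_sq_mul_le_tsum_dyadicLevel {ι : Type*} {b : ι → ℝ≥0∞} (hb : ∀ i, b i ≠ ∞)
    (a : ι → ℝ≥0∞) :
    ∑' i, b i ^ 2 * a i ≤
      ∑' j : ℤ, (2 ^ ((j : ℝ) + 2)) ^ 2 * ∑' i, (dyadicLevel b j).indicator a i := by
  simp_rw [← ENNReal.tsum_mul_left]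
  rw [ENNReal.tsum_comm]
  refine ENNReal.tsum_le_tsum fun i => ?_
  rcases eq_or_ne (b i) 0 with h0 | h0
  · simp [h0]
  obtain ⟨k, hk⟩ := ENNReal.exists_two_rpow_lt_le h0 (hb i)
  have hi : i ∈ dyadicLevel b (k - 1) := by
    rw [dyadicLevel, Set.mem_ofPred_eq, show ((k - 1 : ℤ) : ℝ) + 1 = k by push_cast; ring,
      show ((k - 1 : ℤ) : ℝ) + 2 = k + 1 by push_cast; ring]
    exact hk
  refine le_trans ?_ (ENNReal.le_tsum (k - 1))
  rw [Set.indicator_of_mem hi]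
  gcongr
  exact hi.2

variable {p : ℝ} {b : ℤ × (Fin n → ℤ) → ℝ≥0∞}

lemma lintegral_rpow_tsum_sq_mul_le_tsum_measure (hp : 0 < p) (hp2 : p ≤ 2)
    (hw : ∀ q, Measurable (w q)) (hsupp : ∀ q, ∀ x ∉ cube q, w q x = 0)
    (hC : IsCarlesonFamily μ w (p / 2) K) (hb : ∀ q, b q ≠ ∞) :
    ∫⁻ x, (∑' q, b q ^ 2 * w q x) ^ (p / 2) ∂μ ≤
      ∑' j : ℤ, 2 ^ (((j : ℝ) + 2) * p) * (K * μ (⋃ q ∈ dyadicLevel b j, cube q)) := by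
  have hp2' : 0 < p / 2 := by positivity
  have hp2le : p / 2 ≤ 1 := by linarith
  have hF : ∀ j q, Measurable ((dyadicLevel b j).indicator w q) := fun j =>
    measurable_indicator_apply hw _
  calc ∫⁻ x, (∑' q, b q ^ 2 * w q x) ^ (p / 2) ∂μ
      ≤ ∫⁻ x, ∑' j : ℤ, ((2 ^ ((j : ℝ) + 2)) ^ 2 *
          ∑' q, (dyadicLevel b j).indicator w q x) ^ (p / 2) ∂μ :=
        lintegral_mono fun x => by
          have hlevel := tsum_sq_mul_le_tsum_dyadicLevel hb fun q => w q x
          simp only [← Set.indicator_apply_apply] at hlevel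
          exact (ENNReal.rpow_le_rpow hlevel hp2'.le).trans (ENNReal.rpow_tsum_le _ hp2' hp2le)
    _ = ∑' j : ℤ, 2 ^ (((j : ℝ) + 2) * p) *
          ∫⁻ x, (∑' q, (dyadicLevel b j).indicator w q x) ^ (p / 2) ∂μ := by
        rw [lintegral_tsum fun j => (((Measurable.tsum (hF j)).const_mul _).pow_const
          _).aemeasurable]
        refine tsum_congr fun j => ?_
        simp_rw [ENNReal.mul_rpow_of_nonneg _ _ hp2'.le]
        rw [lintegral_const_mul _ ((Measurable.tsum (hF j)).pow_const _),
          ← ENNReal.rpow_natCast, ← ENNReal.rpow_mul, ← ENNReal.rpow_mul]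
        congr 2
        push_cast
        ring
    _ ≤ ∑' j : ℤ, 2 ^ (((j : ℝ) + 2) * p) * (K * μ (⋃ q ∈ dyadicLevel b j, cube q)) := by
        gcongr with j
        exact hC.lintegral_indicator_le hp2' hw hsupp _

theorem lintegral_rpow_tsum_sq_mul_le_of_measurable (hp : 1 < p) (hp2 : p ≤ 2)
    (hw : ∀ q, Measurable (w q)) (hsupp : ∀ q, ∀ x ∉ cube q, w q x = 0)
    (hC : IsCarlesonFamily μ w (p / 2) K) (hb : ∀ q, b q ≠ ∞) {φ : (Fin n → ℝ) → ℝ≥0∞}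
    (hφ : Measurable φ) (hbφ : ∀ q, b q ≤ ⨍⁻ x in cube q, φ x ∂μ) :
    ∫⁻ x, (∑' q, b q ^ 2 * w q x) ^ (p / 2) ∂μ ≤
      4 ^ p * (1 - 2 ^ (1 - p))⁻¹ * K * ∫⁻ x, φ x ^ p ∂μ := by
  have hweak : ∀ j : ℤ, 2 ^ (j : ℝ) * μ (⋃ q ∈ dyadicLevel b j, cube q) ≤
      ∫⁻ x in {x | 2 ^ (j : ℝ) < φ x}, φ x ∂μ := fun j =>
    mul_measure_biUnion_le_setLIntegral hφ fun q hq =>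
      calc 2 * 2 ^ (j : ℝ) = (2 : ℝ≥0∞) ^ ((j : ℝ) + 1) := by
            rw [ENNReal.rpow_add _ _ two_ne_zero ENNReal.ofNat_ne_top, ENNReal.rpow_one, mul_comm]
        _ < b q := hq.1
        _ ≤ _ := hbφ q
  have hsplit : ∀ j : ℤ, (2 : ℝ≥0∞) ^ (((j : ℝ) + 2) * p) =
      4 ^ p * (2 ^ ((j : ℝ) * (p - 1)) * 2 ^ (j : ℝ)) := fun j => by
    rw [← ENNReal.rpow_add _ _ two_ne_zero ENNReal.ofNat_ne_top,
      show (4 : ℝ≥0∞) = 2 ^ (2 : ℝ) by norm_num, ← ENNReal.rpow_mul,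
      ← ENNReal.rpow_add _ _ two_ne_zero ENNReal.ofNat_ne_top]
    ring_nf
  calc ∫⁻ x, (∑' q, b q ^ 2 * w q x) ^ (p / 2) ∂μ
      ≤ ∑' j : ℤ, 2 ^ (((j : ℝ) + 2) * p) * (K * μ (⋃ q ∈ dyadicLevel b j, cube q)) :=
        lintegral_rpow_tsum_sq_mul_le_tsum_measure (by linarith) hp2 hw hsupp hC hb
    _ = 4 ^ p * K * ∑' j : ℤ,
          2 ^ ((j : ℝ) * (p - 1)) * (2 ^ (j : ℝ) * μ (⋃ q ∈ dyadicLevel b j, cube q)) := by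
        rw [← ENNReal.tsum_mul_left]
        refine tsum_congr fun j => ?_
        rw [hsplit]
        ring
    _ ≤ 4 ^ p * K * ∑' j : ℤ,
          2 ^ ((j : ℝ) * (p - 1)) * ∫⁻ x in {x | 2 ^ (j : ℝ) < φ x}, φ x ∂μ := by
        gcongr with j
        exact hweak j
    _ ≤ 4 ^ p * K * ((1 - 2 ^ (-(p - 1)))⁻¹ * ∫⁻ x, φ x ^ (p - 1 + 1) ∂μ) := by
        gcongr
        exact tsum_two_rpow_mul_setLIntegral_le hφ (by linarith)
    _ = 4 ^ p * (1 - 2 ^ (1 - p))⁻¹ * K * ∫⁻ x, φ x ^ p ∂μ := by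
        rw [neg_sub, sub_add_cancel]
        ring

theorem lintegral_rpow_tsum_sq_mul_le (hp : 1 < p) (hp2 : p ≤ 2)
    (hw : ∀ q, Measurable (w q)) (hsupp : ∀ q, ∀ x ∉ cube q, w q x = 0)
    (hC : IsCarlesonFamily μ w (p / 2) K) (hb : ∀ q, b q ≠ ∞) {φ : (Fin n → ℝ) → ℝ≥0∞}
    (hφ : AEMeasurable φ μ) (hbφ : ∀ q, b q ≤ ⨍⁻ x in cube q, φ x ∂μ) :
    ∫⁻ x, (∑' q, b q ^ 2 * w q x) ^ (p / 2) ∂μ ≤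
      4 ^ p * (1 - 2 ^ (1 - p))⁻¹ * K * ∫⁻ x, φ x ^ p ∂μ := by
  have hφ' := hφ.ae_eq_mk
  have hφp : ∫⁻ x, φ x ^ p ∂μ = ∫⁻ x, hφ.mk φ x ^ p ∂μ :=
    lintegral_congr_ae (hφ'.mono fun x hx => congrArg (· ^ p) hx)
  rw [hφp]
  exact lintegral_rpow_tsum_sq_mul_le_of_measurable hp hp2 hw hsupp hC hb hφ.measurable_mk
    fun q => (hbφ q).trans_eq (laverage_congr (ae_restrict_of_ae hφ'))

end DyadicCube

lemma four_rpow_mul_inv_mul_ofReal_le {p Car : ℝ} (hp : 1 < p) (hCar : 0 ≤ Car) :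
    (4 : ℝ≥0∞) ^ p * (1 - 2 ^ (1 - p))⁻¹ * ENNReal.ofReal (Car ^ p) ≤
      ENNReal.ofReal ((4 * (1 - 2 ^ (1 - p))⁻¹ * Car) ^ p) := by
  have hβ : 0 < 1 - (2 : ℝ) ^ (1 - p) :=
    sub_pos.2 (Real.rpow_lt_one_of_one_lt_of_neg one_lt_two (by linarith))
  have hβ1 : 1 ≤ (1 - (2 : ℝ) ^ (1 - p))⁻¹ :=
    one_le_inv₀ hβ |>.2 (sub_le_self _ (by positivity))
  rw [← ENNReal.ofReal_ofNat 4, ← ENNReal.ofReal_ofNat 2, ENNReal.ofReal_rpow_of_pos (by norm_num),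
    ENNReal.ofReal_rpow_of_pos (by norm_num), ← ENNReal.ofReal_one,
    ← ENNReal.ofReal_sub _ (by positivity), ← ENNReal.ofReal_inv_of_pos hβ,
    ← ENNReal.ofReal_mul (by positivity), ← ENNReal.ofReal_mul (by positivity)]
  refine ENNReal.ofReal_le_ofReal ?_
  rw [Real.mul_rpow (by positivity) hCar, Real.mul_rpow (by positivity) (by positivity)]
  gcongr
  exact Real.self_le_rpow_of_one_le hβ1 hp.le

/-- Carleson embedding theorem on `L^p(μ)`, `1 < p ≤ 2`: if the functions `A_S`
(supported in `S`) satisfy the Carleson condition with constant `Car`, then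
`‖(∑_S |⟨f⟩_S|² |A_S|²)^{1/2}‖_{L^p(μ)} ≲ Car ‖f‖_{L^p(μ)}`. -/
theorem carleson_embedding_Lp (n : ℕ) (p : ℝ) (hp : 1 < p) (hp2 : p ≤ 2) :
    ∃ C : ℝ, 0 < C ∧
    ∀ (μ : Measure (Fin n → ℝ)) (A : ℤ × (Fin n → ℤ) → (Fin n → ℝ) → ℝ) (Car : ℝ),
      0 ≤ Car →
      (∀ q, Measurable (A q)) →
      (∀ q, ∀ x ∉ dyadicCube n q.1 q.2, A q x = 0) →
      (∀ (kQ : ℤ) (cQ : Fin n → ℤ),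
        ∫⁻ x in dyadicCube n kQ cQ,
          (∑' S : {q : ℤ × (Fin n → ℤ) // dyadicCube n q.1 q.2 ⊆ dyadicCube n kQ cQ},
            (‖A S.1 x‖₊ : ℝ≥0∞) ^ 2) ^ (p / 2) ∂μ ≤
          ENNReal.ofReal (Car ^ p) * μ (dyadicCube n kQ cQ)) →
      ∀ f : (Fin n → ℝ) → ℝ, MemLp f (ENNReal.ofReal p) μ →
        ∫⁻ x, (∑' q : ℤ × (Fin n → ℤ),
            (ENNReal.ofReal |cubeAvg μ f q|) ^ 2 * (‖A q x‖₊ : ℝ≥0∞) ^ 2) ^ (p / 2) ∂μ ≤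
          ENNReal.ofReal ((C * Car) ^ p) * ∫⁻ x, (‖f x‖₊ : ℝ≥0∞) ^ p ∂μ := by
  have hβ : 0 < 1 - (2 : ℝ) ^ (1 - p) :=
    sub_pos.2 (Real.rpow_lt_one_of_one_lt_of_neg one_lt_two (by linarith))
  refine ⟨4 * (1 - 2 ^ (1 - p))⁻¹, by positivity, fun μ A Car hCar0 hA hAsupp hCar f hf => ?_⟩
  calc _ ≤ 4 ^ p * (1 - 2 ^ (1 - p))⁻¹ * ENNReal.ofReal (Car ^ p) *
        ∫⁻ x, (‖f x‖₊ : ℝ≥0∞) ^ p ∂μ :=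
      DyadicCube.lintegral_rpow_tsum_sq_mul_le (w := fun q x => (‖A q x‖₊ : ℝ≥0∞) ^ 2)
        (b := fun q => ENNReal.ofReal |cubeAvg μ f q|) (φ := fun x => (‖f x‖₊ : ℝ≥0∞)) hp hp2
        (fun q => (hA q).nnnorm.coe_nnreal_ennreal.pow_const 2)
        (fun q x hx => by simp [hAsupp q x hx]) (fun Q => hCar Q.1 Q.2)
        (fun _ => ENNReal.ofReal_ne_top) hf.1.enorm (DyadicCube.ofReal_abs_cubeAvg_le μ f)
    _ ≤ _ := by
      gcongr
      exact four_rpow_mul_inv_mul_ofReal_le hp hCar0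
end
end

section
/- Let Q be a cube and W_Q the family of maximal dyadic subcubes R ⊂ Q such that 2^r ℓ(R) ≤ ℓ(Q) and dist(R, ∂Q) ≥ ℓ(R)^γ ℓ(Q)^{1-γ}. Then the dilated cubes {9R : R ∈ W_Q} have bounded overlap: ∑_{R ∈ W_Q} 1_{9R}(x) ≲ 1 for all x, with constant depending only on n, r, γ. -/
open MeasureTheory
open scoped ENNReal

noncomputable section

/-- The concentric dilate `9R` of the dyadic cube indexed by `(k, c)`. -/
def dilatedCube (n : ℕ) (k : ℤ) (c : Fin n → ℤ) : Set (Fin n → ℝ) :=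
  {x | ∀ i, |x i - ((c i : ℝ) + 1 / 2) * 2 ^ k| ≤ 9 / 2 * 2 ^ k}

/-- An axis-parallel cube with corner `a` and sidelength `L`. -/
def cornerCube (n : ℕ) (a : Fin n → ℝ) (L : ℝ) : Set (Fin n → ℝ) :=
  {x | ∀ i, a i ≤ x i ∧ x i < a i + L}

/-- Distance between two sets. -/
def setDist {X : Type*} [PseudoMetricSpace X] (A B : Set X) : ℝ :=
  sInf (Set.image2 dist A B)

/-!
Fix `x` and let `R ∈ W_Q` with `x ∈ 9R`. The parent of `R` is not admissible, so either
`ℓ(Q) ≲ 2^r ℓ(R)` or `x` lies within `11 ℓ(R)^γ ℓ(Q)^{1-γ}` of `∂Q`. On the other hand, if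
`R' ∈ W_Q` with `x ∈ 9R'` is small, `400 ℓ(R') ≤ ℓ(Q)`, then `γ < 1/2` makes
`ℓ(R')^γ ℓ(Q)^{1-γ} ≥ 20 ℓ(R')`, so `x` stays at distance `≥ ℓ(R')^γ ℓ(Q)^{1-γ} / 2` from `∂Q`.
Hence `ℓ(R') ≤ 2^{5/γ + 2} ℓ(R)`: the small cubes occupy `O(1/γ)` consecutive scales, the large
ones at most ten, and at each scale at most `10^n` dilates contain `x`.
-/

lemma mem_dyadicCube_iff {n : ℕ} {k : ℤ} {c : Fin n → ℤ} {x : Fin n → ℝ} :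
    x ∈ dyadicCube n k c ↔ ∀ i, ⌊x i / 2 ^ k⌋ = c i := by
  have h2k : (0 : ℝ) < 2 ^ k := by positivity
  refine forall_congr' fun i => ?_
  rw [Int.floor_eq_iff, le_div_iff₀ h2k, div_lt_iff₀ h2k]

lemma corner_mem_dyadicCube_iff {n : ℕ} {k : ℤ} {c c' : Fin n → ℤ} :
    (fun i => (c' i : ℝ) * 2 ^ k) ∈ dyadicCube n k c ↔ c' = c := by
  have h2k : (2 : ℝ) ^ k ≠ 0 := by positivity
  simp [mem_dyadicCube_iff, funext_iff, h2k]

lemma corner_mem_dyadicCube (n : ℕ) (k : ℤ) (c : Fin n → ℤ) :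
    (fun i => (c i : ℝ) * 2 ^ k) ∈ dyadicCube n k c :=
  corner_mem_dyadicCube_iff.mpr rfl

lemma dyadicCube_subset_parent (n : ℕ) (k : ℤ) (c : Fin n → ℤ) :
    dyadicCube n k c ⊆ dyadicCube n (k + 1) (fun i => c i / 2) := by
  intro x hx
  rw [mem_dyadicCube_iff] at hx ⊢
  intro i
  rw [zpow_add_one₀ two_ne_zero, ← div_div, ← hx i]
  exact_mod_cast Int.floor_div_natCast (x i / 2 ^ k) 2

lemma dyadicCube_ssubset_parent {n : ℕ} (hn : 0 < n) (k : ℤ) (c : Fin n → ℤ) :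
    dyadicCube n k c ⊂ dyadicCube n (k + 1) (fun i => c i / 2) := by
  refine (dyadicCube_subset_parent n k c).ssubset_of_not_subset fun h => ?_
  let i₀ : Fin n := ⟨0, hn⟩
  -- the sibling of `c` across the midplane of the parent in direction `i₀`
  let c' := Function.update c i₀ (c i₀ + 1 - 2 * (c i₀ % 2))
  have hc' : c' ≠ c := fun h => by
    have := congrFun h i₀
    simp only [c', Function.update_self] at this
    omega
  have hparent : (fun i => c' i / 2) = fun i => c i / 2 := by
    funext i
    rcases eq_or_ne i i₀ with rfl | hi
    · simp only [c', Function.update_self]; omega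
    · simp [c', Function.update_of_ne hi]
  have hcorner := dyadicCube_subset_parent n k c' (corner_mem_dyadicCube n k c')
  rw [hparent] at hcorner
  exact hc' (corner_mem_dyadicCube_iff.mp (h hcorner))

lemma dist_le_of_mem_dyadicCube {n : ℕ} {k : ℤ} {c : Fin n → ℤ} {x y : Fin n → ℝ}
    (hx : x ∈ dyadicCube n k c) (hy : y ∈ dyadicCube n k c) : dist x y ≤ 2 ^ k := by
  refine (dist_pi_le_iff (by positivity)).mpr fun i => ?_
  rw [Real.dist_eq, abs_le]
  obtain ⟨hx₁, hx₂⟩ := hx i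
  obtain ⟨hy₁, hy₂⟩ := hy i
  constructor <;> nlinarith

lemma dist_le_of_mem_dilatedCube {n : ℕ} {k : ℤ} {c : Fin n → ℤ} {x y : Fin n → ℝ}
    (hx : x ∈ dilatedCube n k c) (hy : y ∈ dilatedCube n k c) : dist x y ≤ 9 * 2 ^ k := by
  refine (dist_pi_le_iff (by positivity)).mpr fun i => ?_
  have hxi : |x i - ((c i : ℝ) + 1 / 2) * 2 ^ k| ≤ 9 / 2 * 2 ^ k := hx i
  have hyi : |((c i : ℝ) + 1 / 2) * 2 ^ k - y i| ≤ 9 / 2 * 2 ^ k := abs_sub_comm (y i) _ ▸ hy i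
  rw [Real.dist_eq]
  linarith [abs_sub_le (x i) (((c i : ℝ) + 1 / 2) * 2 ^ k) (y i)]

lemma parent_subset_dilatedCube (n : ℕ) (k : ℤ) (c : Fin n → ℤ) :
    dyadicCube n (k + 1) (fun i => c i / 2) ⊆ dilatedCube n k c := by
  intro x hx i
  have h2k : (0 : ℝ) < 2 ^ k := by positivity
  have hpar : 2 * (c i / 2) ≤ c i ∧ c i ≤ 2 * (c i / 2) + 1 := by omega
  obtain ⟨hlo, hhi⟩ : 2 * ((c i / 2 : ℤ) : ℝ) ≤ c i ∧ (c i : ℝ) ≤ 2 * ((c i / 2 : ℤ) : ℝ) + 1 := by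
    exact_mod_cast hpar
  obtain ⟨hx₁, hx₂⟩ := hx i
  rw [zpow_add_one₀ two_ne_zero] at hx₁ hx₂
  rw [abs_le]
  constructor <;> nlinarith

lemma dyadicCube_subset_dilatedCube (n : ℕ) (k : ℤ) (c : Fin n → ℤ) :
    dyadicCube n k c ⊆ dilatedCube n k c :=
  (dyadicCube_subset_parent n k c).trans (parent_subset_dilatedCube n k c)

def dilatedCubeIndexBox (n : ℕ) (k : ℤ) (x : Fin n → ℝ) : Finset (Fin n → ℤ) :=
  Fintype.piFinset fun i => Finset.Icc (⌈x i / 2 ^ k⌉ - 5) (⌈x i / 2 ^ k⌉ + 4)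

lemma card_dilatedCubeIndexBox (n : ℕ) (k : ℤ) (x : Fin n → ℝ) :
    (dilatedCubeIndexBox n k x).card = 10 ^ n := by
  simp [dilatedCubeIndexBox, Int.card_Icc, show ∀ m : ℤ, m + 4 + 1 - (m - 5) = 10 by omega]

lemma mem_dilatedCubeIndexBox {n : ℕ} {k : ℤ} {c : Fin n → ℤ} {x : Fin n → ℝ}
    (hx : x ∈ dilatedCube n k c) : c ∈ dilatedCubeIndexBox n k x := by
  rw [dilatedCubeIndexBox, Fintype.mem_piFinset]
  intro i
  have h2k : (0 : ℝ) < 2 ^ k := by positivity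
  obtain ⟨hlo, hhi⟩ := abs_le.mp (hx i)
  have hup : x i / 2 ^ k ≤ c i + 5 := by rw [div_le_iff₀ h2k]; linarith
  have hdown : (c i : ℝ) - 4 ≤ x i / 2 ^ k := by rw [le_div_iff₀ h2k]; linarith
  have h₁ : ⌈x i / 2 ^ k⌉ ≤ c i + 5 := Int.ceil_le.mpr (by exact_mod_cast hup)
  have h₂ : c i - 4 ≤ ⌈x i / 2 ^ k⌉ := Int.le_ceil_iff.mpr (by push_cast; linarith)
  rw [Finset.mem_Icc]
  omega

lemma exists_mem_frontier_dist_le {E : Type*} [SeminormedAddCommGroup E] [NormedSpace ℝ E]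
    {s : Set E} {p y : E} (hp : p ∈ s) (hy : y ∉ s) :
    ∃ z ∈ frontier s, dist p z ≤ dist p y := by
  have : PreconnectedSpace (segment ℝ p y) :=
    Subtype.preconnectedSpace (convex_segment p y).isPreconnected
  have hne : ((↑) ⁻¹' s : Set (segment ℝ p y)).Nonempty := ⟨⟨p, left_mem_segment ℝ p y⟩, hp⟩
  have hnuniv : ((↑) ⁻¹' s : Set (segment ℝ p y)) ≠ Set.univ := fun h =>
    hy (show (⟨y, right_mem_segment ℝ p y⟩ : segment ℝ p y) ∈ (↑) ⁻¹' s from h ▸ Set.mem_univ _)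
  obtain ⟨⟨z, hzseg⟩, hz⟩ := nonempty_frontier_iff.mpr ⟨hne, hnuniv⟩
  refine ⟨z, continuous_subtype_val.frontier_preimage_subset s hz, ?_⟩
  linarith [dist_add_dist_of_mem_segment hzseg, dist_nonneg (x := z) (y := y)]

lemma setDist_le_dist {X : Type*} [PseudoMetricSpace X] {A B : Set X} {p z : X}
    (hp : p ∈ A) (hz : z ∈ B) : setDist A B ≤ dist p z :=
  csInf_le ⟨0, Set.forall_mem_image2.mpr fun _ _ _ _ => dist_nonneg⟩ (Set.mem_image2_of_mem hp hz)

lemma exists_dist_lt_of_setDist_lt {X : Type*} [PseudoMetricSpace X] {A B : Set X} {d : ℝ}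
    (hA : A.Nonempty) (hB : B.Nonempty) (h : setDist A B < d) :
    ∃ p ∈ A, ∃ z ∈ B, dist p z < d := by
  obtain ⟨_, ⟨p, hp, z, hz, rfl⟩, hlt⟩ := exists_lt_of_csInf_lt (hA.image2 hB) h
  exact ⟨p, hp, z, hz, hlt⟩

lemma setDist_empty_right {X : Type*} [PseudoMetricSpace X] (A : Set X) :
    setDist A ∅ = 0 := by
  simp [setDist]

lemma tsum_indicator_le_card {ι X : Type*} {W : Set ι} {s : ι → Set X} {x : X} {T : Finset ι}
    (hT : ∀ i ∈ W, x ∈ s i → i ∈ T) :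
    ∑' i : W, (s i).indicator (fun _ => (1 : ℝ≥0∞)) x ≤ T.card := by
  calc ∑' i : W, (s i).indicator (fun _ => (1 : ℝ≥0∞)) x
      ≤ ∑' i : W, (T : Set ι).indicator (fun _ => (1 : ℝ≥0∞)) i := by
        refine ENNReal.tsum_le_tsum fun i => ?_
        by_cases hx : x ∈ s i
        · simp [hx, hT i i.2 hx]
        · simp [hx]
    _ ≤ ∑' i, (T : Set ι).indicator (fun _ => (1 : ℝ≥0∞)) i :=
        ENNReal.tsum_comp_le_tsum_of_injective Subtype.coe_injective _
    _ = T.card := by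
        rw [tsum_eq_sum fun i hi => Set.indicator_of_notMem hi _,
          Finset.sum_congr rfl fun i hi => Set.indicator_of_mem (Finset.mem_coe.mpr hi) _]
        simp

section Interpolation

variable {γ ℓ L : ℝ}

lemma rpow_mul_rpow_one_sub_eq_mul (hℓ : 0 < ℓ) (hL : 0 ≤ L) :
    ℓ ^ γ * L ^ (1 - γ) = ℓ * (L / ℓ) ^ (1 - γ) := by
  rw [Real.div_rpow hL hℓ.le, mul_div_assoc', mul_div_right_comm]
  congr 1
  rw [eq_div_iff (by positivity), ← Real.rpow_add hℓ]
  simp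

lemma le_rpow_mul_rpow_one_sub (hℓ : 0 < ℓ) (hle : ℓ ≤ L) (hγ : γ ≤ 1) :
    ℓ ≤ ℓ ^ γ * L ^ (1 - γ) := by
  rw [rpow_mul_rpow_one_sub_eq_mul hℓ (hℓ.le.trans hle)]
  exact le_mul_of_one_le_right hℓ.le
    (Real.one_le_rpow ((one_le_div hℓ).mpr hle) (by linarith))

lemma sqrt_le_rpow_one_sub {t : ℝ} (ht : 1 ≤ t) (hγ : γ ≤ 1 / 2) : √t ≤ t ^ (1 - γ) := by
  rw [Real.sqrt_eq_rpow]
  exact Real.rpow_le_rpow_of_exponent_le ht (by linarith)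

lemma le_four_mul_of_rpow_mul_rpow_le (hγ : γ ≤ 1 / 2) (hℓ : 0 < ℓ) (hL : 0 ≤ L)
    (h : ℓ ^ γ * L ^ (1 - γ) ≤ 2 * ℓ) : L ≤ 4 * ℓ := by
  by_contra! hlt
  have ht : 4 < L / ℓ := by rwa [lt_div_iff₀ hℓ]
  have h2 : 2 < (L / ℓ) ^ (1 - γ) :=
    (Real.lt_sqrt (by norm_num)).mpr (by norm_num; linarith) |>.trans_le
      (sqrt_le_rpow_one_sub (by linarith) hγ)
  rw [rpow_mul_rpow_one_sub_eq_mul hℓ hL] at h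
  nlinarith

lemma mul_le_rpow_mul_rpow_of_sq_mul_le {m : ℝ} (hγ : γ ≤ 1 / 2) (hℓ : 0 < ℓ) (hm : 1 ≤ m)
    (h : m ^ 2 * ℓ ≤ L) : m * ℓ ≤ ℓ ^ γ * L ^ (1 - γ) := by
  have ht : m ^ 2 ≤ L / ℓ := by rwa [le_div_iff₀ hℓ]
  have hm' : m ≤ (L / ℓ) ^ (1 - γ) :=
    (Real.le_sqrt_of_sq_le ht).trans (sqrt_le_rpow_one_sub (by nlinarith) hγ)
  rw [rpow_mul_rpow_one_sub_eq_mul hℓ (by nlinarith)]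
  nlinarith

end Interpolation

lemma sub_mul_le_of_two_zpow_rpow_le {γ : ℝ} {k k' : ℤ} {m : ℕ}
    (h : ((2 : ℝ) ^ k') ^ γ ≤ 2 ^ m * ((2 : ℝ) ^ k) ^ γ) : ((k' : ℝ) - k) * γ ≤ m := by
  have hpow : ∀ j : ℤ, ((2 : ℝ) ^ j) ^ γ = 2 ^ ((j : ℝ) * γ) := fun j => by
    rw [← Real.rpow_intCast, ← Real.rpow_mul zero_le_two]
  rw [hpow, hpow, ← Real.rpow_natCast, ← Real.rpow_add zero_lt_two,
    Real.rpow_le_rpow_left_iff one_lt_two] at h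
  linarith

lemma sub_le_of_two_zpow_le {k k' : ℤ} {m : ℕ} (h : (2 : ℝ) ^ k' ≤ 2 ^ m * 2 ^ k) : k' - k ≤ m := by
  rw [← zpow_natCast, ← zpow_add₀ two_ne_zero, zpow_le_zpow_iff_right₀ one_lt_two] at h
  omega

/-- The two conditions defining the Whitney family `W_Q` of `Q = cornerCube n a L`. -/
def IsWhitneyAdmissible (n r : ℕ) (γ : ℝ) (a : Fin n → ℝ) (L : ℝ) (k : ℤ) (c : Fin n → ℤ) :
    Prop :=
  dyadicCube n k c ⊆ cornerCube n a L ∧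
    (2 : ℝ) ^ r * (2 : ℝ) ^ k ≤ L ∧
    setDist (dyadicCube n k c) (frontier (cornerCube n a L)) ≥ ((2 : ℝ) ^ k) ^ γ * L ^ (1 - γ)

namespace IsWhitneyAdmissible

variable {n r : ℕ} {γ L : ℝ} {a x z : Fin n → ℝ} {k : ℤ} {c : Fin n → ℤ}

lemma two_zpow_le (h : IsWhitneyAdmissible n r γ a L k c) : (2 : ℝ) ^ k ≤ L :=
  le_trans (le_mul_of_one_le_left (by positivity) (one_le_pow₀ one_le_two)) h.2.1

lemma le_dist (h : IsWhitneyAdmissible n r γ a L k c) {p : Fin n → ℝ}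
    (hp : p ∈ dyadicCube n k c) (hz : z ∈ frontier (cornerCube n a L)) :
    ((2 : ℝ) ^ k) ^ γ * L ^ (1 - γ) ≤ dist p z :=
  h.2.2.trans (setDist_le_dist hp hz)

lemma frontier_nonempty (h : IsWhitneyAdmissible n r γ a L k c) (hL : 0 < L) :
    (frontier (cornerCube n a L)).Nonempty := by
  refine Set.nonempty_iff_ne_empty.mpr fun hempty => ?_
  have := h.2.2
  rw [hempty, setDist_empty_right] at this
  have : 0 < ((2 : ℝ) ^ k) ^ γ * L ^ (1 - γ) := by positivity
  linarith

lemma dim_pos (h : IsWhitneyAdmissible n r γ a L k c) (hL : 0 < L) : 0 < n := by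
  refine Nat.pos_of_ne_zero fun hn => ?_
  subst hn
  have huniv : cornerCube 0 a L = Set.univ := Set.eq_univ_of_forall fun _ i => i.elim0
  simpa [huniv] using h.frontier_nonempty hL

lemma sub_le_dist (h : IsWhitneyAdmissible n r γ a L k c) (hx : x ∈ dilatedCube n k c)
    (hz : z ∈ frontier (cornerCube n a L)) :
    ((2 : ℝ) ^ k) ^ γ * L ^ (1 - γ) - 9 * 2 ^ k ≤ dist x z := by
  have hp := corner_mem_dyadicCube n k c
  have hpx := dist_le_of_mem_dilatedCube (dyadicCube_subset_dilatedCube n k c hp) hx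
  linarith [h.le_dist hp hz, dist_triangle (fun i => (c i : ℝ) * 2 ^ k) x z]

lemma le_four_mul_of_not_parent_subset (h : IsWhitneyAdmissible n r γ a L k c)
    (hγ : γ ≤ 1 / 2) (hL : 0 < L)
    (hpar : ¬ dyadicCube n (k + 1) (fun i => c i / 2) ⊆ cornerCube n a L) :
    L ≤ 4 * 2 ^ k := by
  obtain ⟨y, hy, hyQ⟩ := Set.not_subset.mp hpar
  have hp := corner_mem_dyadicCube n k c
  obtain ⟨z, hz, hpz⟩ := exists_mem_frontier_dist_le (h.1 hp) hyQ
  refine le_four_mul_of_rpow_mul_rpow_le hγ (by positivity) hL.le ?_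
  calc ((2 : ℝ) ^ k) ^ γ * L ^ (1 - γ)
      ≤ dist (fun i => (c i : ℝ) * 2 ^ k) y := (h.le_dist hp hz).trans hpz
    _ ≤ 2 ^ (k + 1) := dist_le_of_mem_dyadicCube (dyadicCube_subset_parent n k c hp) hy
    _ = 2 * 2 ^ k := by rw [zpow_add_one₀ two_ne_zero, mul_comm]

lemma exists_dist_le_of_parent_setDist_lt (h : IsWhitneyAdmissible n r γ a L k c)
    (hγ : γ ≤ 1) (hL : 0 < L) (hx : x ∈ dilatedCube n k c)
    (hpar : setDist (dyadicCube n (k + 1) (fun i => c i / 2)) (frontier (cornerCube n a L)) <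
      ((2 : ℝ) ^ (k + 1)) ^ γ * L ^ (1 - γ)) :
    ∃ z ∈ frontier (cornerCube n a L), dist x z ≤ 11 * (((2 : ℝ) ^ k) ^ γ * L ^ (1 - γ)) := by
  obtain ⟨p, hp, z, hz, hpz⟩ := exists_dist_lt_of_setDist_lt
    ⟨_, corner_mem_dyadicCube n _ _⟩ (h.frontier_nonempty hL) hpar
  refine ⟨z, hz, ?_⟩
  have hparent_gap : ((2 : ℝ) ^ (k + 1)) ^ γ * L ^ (1 - γ) ≤
      2 * (((2 : ℝ) ^ k) ^ γ * L ^ (1 - γ)) := by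
    rw [zpow_add_one₀ two_ne_zero, Real.mul_rpow (by positivity) zero_le_two]
    have h2γ : (2 : ℝ) ^ γ ≤ 2 := Real.rpow_le_self_of_one_le one_le_two hγ
    have : 0 ≤ ((2 : ℝ) ^ k) ^ γ * L ^ (1 - γ) := by positivity
    nlinarith
  have hxp : dist x p ≤ 9 * 2 ^ k :=
    dist_le_of_mem_dilatedCube hx (parent_subset_dilatedCube n k c hp)
  have hside : (2 : ℝ) ^ k ≤ ((2 : ℝ) ^ k) ^ γ * L ^ (1 - γ) :=
    le_rpow_mul_rpow_one_sub (by positivity) h.two_zpow_le hγ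
  linarith [dist_triangle x p z]

lemma le_or_exists_dist_le_of_not_parent (h : IsWhitneyAdmissible n r γ a L k c)
    (hpar : ¬ IsWhitneyAdmissible n r γ a L (k + 1) (fun i => c i / 2))
    (hγ : γ ≤ 1 / 2) (hL : 0 < L) (hx : x ∈ dilatedCube n k c) :
    L ≤ 2 ^ (r + 2) * 2 ^ k ∨
      ∃ z ∈ frontier (cornerCube n a L), dist x z ≤ 11 * (((2 : ℝ) ^ k) ^ γ * L ^ (1 - γ)) := by
  simp only [IsWhitneyAdmissible, not_and_or, not_le, ge_iff_le] at hpar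
  rcases hpar with hsub | hbig | hclose
  · left
    calc L ≤ 4 * 2 ^ k := h.le_four_mul_of_not_parent_subset hγ hL hsub
      _ ≤ 2 ^ (r + 2) * 2 ^ k := by
        gcongr
        calc (4 : ℝ) = 2 ^ 2 := by norm_num
          _ ≤ 2 ^ (r + 2) := pow_le_pow_right₀ one_le_two (by omega)
  · left
    rw [zpow_add_one₀ two_ne_zero] at hbig
    rw [pow_succ, pow_succ]
    nlinarith [zpow_pos (two_pos : (0 : ℝ) < 2) k, pow_pos (two_pos : (0 : ℝ) < 2) r]
  · exact Or.inr (h.exists_dist_le_of_parent_setDist_lt (by linarith) hL hx hclose)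

end IsWhitneyAdmissible

lemma exists_finset_card_le_of_sub_le {A : Set ℤ} {d : ℕ} (h : ∀ a ∈ A, ∀ b ∈ A, a - b ≤ d) :
    ∃ F : Finset ℤ, F.card ≤ 2 * d + 1 ∧ A ⊆ F := by
  rcases A.eq_empty_or_nonempty with rfl | ⟨a₀, ha₀⟩
  · exact ⟨∅, by simp, by simp⟩
  refine ⟨Finset.Icc (a₀ - d) (a₀ + d), by simp [Int.card_Icc]; omega, fun b hb => ?_⟩
  have := h b hb a₀ ha₀
  have := h a₀ ha₀ b hb
  simp only [Finset.coe_Icc, Set.mem_Icc]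
  omega

section Scales

variable {n r : ℕ} {γ L : ℝ} {a x : Fin n → ℝ}

lemma scale_sub_le_of_small {k k' : ℤ} {c c' : Fin n → ℤ} (hγ0 : 0 < γ) (hγ : γ ≤ 1 / 2)
    (hL : 0 < L) (hq : IsWhitneyAdmissible n r γ a L k c)
    (hpar : ¬ IsWhitneyAdmissible n r γ a L (k + 1) (fun i => c i / 2))
    (hq' : IsWhitneyAdmissible n r γ a L k' c')
    (hx : x ∈ dilatedCube n k c) (hx' : x ∈ dilatedCube n k' c')
    (hsmall : 400 * 2 ^ k' ≤ L) : k' - k ≤ (⌈5 / γ⌉₊ + 2 : ℕ) := by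
  rcases hq.le_or_exists_dist_le_of_not_parent hpar hγ hL hx with hbig | ⟨z, hz, hxz⟩
  · have : (2 : ℝ) ^ k' ≤ 2 ^ 2 * 2 ^ k := by
      have := hq'.2.1.trans hbig
      rw [pow_add, mul_assoc] at this
      exact le_of_mul_le_mul_left this (by positivity)
    have := sub_le_of_two_zpow_le this
    push_cast at this ⊢
    omega
  · have hgap' : 20 * 2 ^ k' ≤ ((2 : ℝ) ^ k') ^ γ * L ^ (1 - γ) :=
      mul_le_rpow_mul_rpow_of_sq_mul_le hγ (by positivity) (by norm_num) (by linarith)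
    have hfar := hq'.sub_le_dist hx' hz
    -- `hfar` and `hgap'` keep `x` away from `∂Q` at scale `R'`, `hxz` puts it near `∂Q` at scale `R`
    have : ((2 : ℝ) ^ k') ^ γ ≤ 2 ^ 5 * ((2 : ℝ) ^ k) ^ γ := by
      refine le_of_mul_le_mul_right ?_ (by positivity : 0 < L ^ (1 - γ))
      nlinarith [zpow_pos (two_pos : (0 : ℝ) < 2) k']
    have hexp := sub_mul_le_of_two_zpow_rpow_le this
    have : ((k' - k : ℤ) : ℝ) ≤ ⌈5 / γ⌉₊ := by
      push_cast
      exact ((le_div_iff₀ hγ0).mpr (by exact_mod_cast hexp)).trans (Nat.le_ceil _)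
    have : k' - k ≤ ⌈5 / γ⌉₊ := by exact_mod_cast this
    push_cast
    omega

lemma scale_sub_le_of_large {k k' : ℤ} {c' : Fin n → ℤ}
    (hq' : IsWhitneyAdmissible n r γ a L k' c') (hlarge : L < 400 * 2 ^ k) : k' - k ≤ 9 := by
  refine sub_le_of_two_zpow_le (hq'.two_zpow_le.trans (hlarge.le.trans ?_))
  gcongr
  norm_num

variable {W : Set (ℤ × (Fin n → ℤ))}

lemma exists_finset_scales (hγ0 : 0 < γ) (hγ : γ ≤ 1 / 2) (hL : 0 < L)
    (hW : ∀ q ∈ W, IsWhitneyAdmissible n r γ a L q.1 q.2)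
    (hmax : ∀ q ∈ W, ∀ (k' : ℤ) (c' : Fin n → ℤ),
      dyadicCube n q.1 q.2 ⊂ dyadicCube n k' c' → ¬ IsWhitneyAdmissible n r γ a L k' c')
    (x : Fin n → ℝ) :
    ∃ F : Finset ℤ, F.card ≤ 2 * (⌈5 / γ⌉₊ + 2) + 20 ∧
      ∀ q ∈ W, x ∈ dilatedCube n q.1 q.2 → q.1 ∈ F := by
  have hpar : ∀ q ∈ W, ¬ IsWhitneyAdmissible n r γ a L (q.1 + 1) (fun i => q.2 i / 2) :=
    fun q hq => hmax q hq _ _ (dyadicCube_ssubset_parent ((hW q hq).dim_pos hL) q.1 q.2)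
  obtain ⟨F₁, hF₁, hsmall⟩ := exists_finset_card_le_of_sub_le (A := {k | ∃ c, (k, c) ∈ W ∧
    x ∈ dilatedCube n k c ∧ 400 * 2 ^ k ≤ L}) (d := ⌈5 / γ⌉₊ + 2) <| by
    rintro k' ⟨c', hq', hx', hsmall⟩ k ⟨c, hq, hx, -⟩
    exact scale_sub_le_of_small hγ0 hγ hL (hW _ hq) (hpar _ hq) (hW _ hq') hx hx' hsmall
  obtain ⟨F₂, hF₂, hlarge⟩ := exists_finset_card_le_of_sub_le (A := {k | ∃ c, (k, c) ∈ W ∧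
    x ∈ dilatedCube n k c ∧ L < 400 * 2 ^ k}) (d := 9) <| by
    rintro k' ⟨c', hq', -, -⟩ k ⟨c, -, -, hlarge⟩
    exact_mod_cast scale_sub_le_of_large (hW _ hq') hlarge
  refine ⟨F₁ ∪ F₂, (Finset.card_union_le _ _).trans (by omega), fun ⟨k, c⟩ hq hx => ?_⟩
  rw [Finset.mem_union]
  rcases le_or_gt (400 * (2 : ℝ) ^ k) L with h | h
  · exact Or.inl (hsmall ⟨c, hq, hx, h⟩)
  · exact Or.inr (hlarge ⟨c, hq, hx, h⟩)

lemma exists_finset_cubes (hγ0 : 0 < γ) (hγ : γ ≤ 1 / 2) (hL : 0 < L)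
    (hW : ∀ q ∈ W, IsWhitneyAdmissible n r γ a L q.1 q.2)
    (hmax : ∀ q ∈ W, ∀ (k' : ℤ) (c' : Fin n → ℤ),
      dyadicCube n q.1 q.2 ⊂ dyadicCube n k' c' → ¬ IsWhitneyAdmissible n r γ a L k' c')
    (x : Fin n → ℝ) :
    ∃ T : Finset (ℤ × (Fin n → ℤ)), T.card ≤ (2 * (⌈5 / γ⌉₊ + 2) + 20) * 10 ^ n ∧
      ∀ q ∈ W, x ∈ dilatedCube n q.1 q.2 → q ∈ T := by
  classical
  obtain ⟨F, hFcard, hF⟩ := exists_finset_scales hγ0 hγ hL hW hmax x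
  refine ⟨F.biUnion fun k => (dilatedCubeIndexBox n k x).image (Prod.mk k), ?_, ?_⟩
  · refine (Finset.card_biUnion_le_card_mul _ _ _ fun k _ => ?_).trans
      (Nat.mul_le_mul_right _ hFcard)
    exact Finset.card_image_le.trans (card_dilatedCubeIndexBox n k x).le
  · intro q hq hx
    exact Finset.mem_biUnion.mpr ⟨q.1, hF q hq hx,
      Finset.mem_image.mpr ⟨q.2, mem_dilatedCubeIndexBox hx, rfl⟩⟩

end Scales

theorem whitney_dilates_bounded_overlap_general (n : ℕ) (r : ℕ) (γ : ℝ)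
    (hγ0 : 0 < γ) (hγ : γ < 1 / 2) :
    ∃ C : ℝ, 0 < C ∧
    ∀ (a : Fin n → ℝ) (L : ℝ), 0 < L →
    ∀ (W : Set (ℤ × (Fin n → ℤ))),
      (∀ q ∈ W, dyadicCube n q.1 q.2 ⊆ cornerCube n a L ∧
        (2 : ℝ) ^ r * (2 : ℝ) ^ q.1 ≤ L ∧
        setDist (dyadicCube n q.1 q.2) (frontier (cornerCube n a L)) ≥
          ((2 : ℝ) ^ q.1) ^ γ * L ^ (1 - γ)) →
      (∀ q ∈ W, ∀ (k' : ℤ) (c' : Fin n → ℤ),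
        dyadicCube n q.1 q.2 ⊂ dyadicCube n k' c' →
        ¬ (dyadicCube n k' c' ⊆ cornerCube n a L ∧
          (2 : ℝ) ^ r * (2 : ℝ) ^ k' ≤ L ∧
          setDist (dyadicCube n k' c') (frontier (cornerCube n a L)) ≥
            ((2 : ℝ) ^ k') ^ γ * L ^ (1 - γ))) →
      ∀ x : Fin n → ℝ,
        (∑' q : W, Set.indicator (dilatedCube n q.1.1 q.1.2)
          (fun _ => (1 : ℝ≥0∞)) x) ≤ ENNReal.ofReal C := by
  refine ⟨((2 * (⌈5 / γ⌉₊ + 2) + 20) * 10 ^ n : ℕ), by positivity, ?_⟩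
  intro a L hL W hW hmax x
  obtain ⟨T, hTcard, hT⟩ := exists_finset_cubes hγ0 hγ.le hL hW hmax x
  calc _ ≤ (T.card : ℝ≥0∞) := tsum_indicator_le_card hT
    _ ≤ _ := by rw [ENNReal.ofReal_natCast]; exact_mod_cast hTcard

/-- Bounded overlap of the dilated Whitney cubes: if `W_Q` consists of the maximal
dyadic subcubes `R ⊆ Q` with `2^r ℓ(R) ≤ ℓ(Q)` and
`dist(R, ∂Q) ≥ ℓ(R)^γ ℓ(Q)^{1-γ}`, then `∑_{R ∈ W_Q} 1_{9R}(x) ≲ 1`, with constant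
depending only on `n, r, γ`. -/
theorem whitney_dilates_bounded_overlap (n : ℕ) (r : ℕ) (γ : ℝ)
    (hr : 0 < r) (hγ0 : 0 < γ) (hγ : γ < 1 / 2) :
    ∃ C : ℝ, 0 < C ∧
    ∀ (a : Fin n → ℝ) (L : ℝ), 0 < L →
    ∀ (W : Set (ℤ × (Fin n → ℤ))),
      (∀ q ∈ W, dyadicCube n q.1 q.2 ⊆ cornerCube n a L ∧
        (2 : ℝ) ^ r * (2 : ℝ) ^ q.1 ≤ L ∧
        setDist (dyadicCube n q.1 q.2) (frontier (cornerCube n a L)) ≥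
          ((2 : ℝ) ^ q.1) ^ γ * L ^ (1 - γ)) →
      (∀ q ∈ W, ∀ (k' : ℤ) (c' : Fin n → ℤ),
        dyadicCube n q.1 q.2 ⊂ dyadicCube n k' c' →
        ¬ (dyadicCube n k' c' ⊆ cornerCube n a L ∧
          (2 : ℝ) ^ r * (2 : ℝ) ^ k' ≤ L ∧
          setDist (dyadicCube n k' c') (frontier (cornerCube n a L)) ≥
            ((2 : ℝ) ^ k') ^ γ * L ^ (1 - γ))) →
      ∀ x : Fin n → ℝ,
        (∑' q : W, Set.indicator (dilatedCube n q.1.1 q.1.2)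
          (fun _ => (1 : ℝ≥0∞)) x) ≤ ENNReal.ofReal C :=
  whitney_dilates_bounded_overlap_general n r γ hγ0 hγ
end
end
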